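/- If a simple polygon P has no critical vertices with respect to an interior point q, then V_k(P,q) = P for every k ≥ 0; in particular ∂V_k(P,q) = ∂P. -/

import Mathlib

open Set

/-- A simple polygon in the plane, given by its cyclic sequence of vertices.
Non-adjacent edges are disjoint, and adjacent edges meet exactly in their
shared vertex. -/
structure SimplePolygon where
  n : ℕ
  three_le : 3 ≤ n
  vtx : ZMod n → ℝ × ℝ
  inj : Function.Injective vtx
  nondegenerate : ∀ i j : ZMod n, i ≠ j → i + 1 ≠ j → j + 1 ≠ i →
    segment ℝ (vtx i) (vtx (i + 1)) ∩ segment ℝ (vtx j) (vtx (j + 1)) = ∅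
  consecutive : ∀ i : ZMod n,
    segment ℝ (vtx i) (vtx (i + 1)) ∩ segment ℝ (vtx (i + 1)) (vtx (i + 1 + 1))
      = {vtx (i + 1)}

namespace SimplePolygon

variable (P : SimplePolygon)

/-- The `i`-th edge of the polygon, from vertex `i` to vertex `i+1`. -/
def edge (i : ZMod P.n) : Set (ℝ × ℝ) := segment ℝ (P.vtx i) (P.vtx (i + 1))

/-- The boundary `∂P` of the polygon: the union of its edges. -/
def boundary : Set (ℝ × ℝ) := ⋃ i : ZMod P.n, P.edge i

/-- The interior of the polygon (Jordan): points off the boundary whose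
connected component in the complement of the boundary is bounded. -/
def inside : Set (ℝ × ℝ) :=
  {x | x ∉ P.boundary ∧ Bornology.IsBounded (connectedComponentIn P.boundaryᶜ x)}

/-- The polygon as a region of the plane: interior together with boundary. -/
def region : Set (ℝ × ℝ) := P.inside ∪ P.boundary

/-- The set of (indices of) edges of `P` properly met by the open segment `qp`
(the endpoints `q`, `p` are not counted). -/
def crossSet (q p : ℝ × ℝ) : Set (ZMod P.n) :=
  {i | (openSegment ℝ q p ∩ P.edge i).Nonempty}

/-- The number of times the segment `qp` crosses the boundary of `P`
(endpoints not counted). -/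
noncomputable def crossCount (q p : ℝ × ℝ) : ℕ := (P.crossSet q p).ncard

/-- The k-visibility region `V_k(P,q)`: the points of `P` whose segment to `q`
crosses the boundary at most `k` times. -/
def vis (q : ℝ × ℝ) (k : ℕ) : Set (ℝ × ℝ) :=
  {p | p ∈ P.region ∧ P.crossCount q p ≤ k}

/-- No vertex of `P` lies on the segment `qp`. -/
def segAvoidsVtx (q p : ℝ × ℝ) : Prop := ∀ i : ZMod P.n, P.vtx i ∉ segment ℝ q p

/-- Weak general position: `q` lies on no line through two vertices of `P`. -/
def wgp (q : ℝ × ℝ) : Prop :=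
  ∀ i j : ZMod P.n, i ≠ j → ¬ Collinear ℝ ({q, P.vtx i, P.vtx j} : Set (ℝ × ℝ))

/-- Signed area test: positive iff `x` is strictly to the left of the ray `qv`. -/
noncomputable def cross2 (q v x : ℝ × ℝ) : ℝ :=
  (v.1 - q.1) * (x.2 - q.2) - (v.2 - q.2) * (x.1 - q.1)

/-- Vertex `i` is critical for `q`: both incident edges (i.e. both neighbouring
vertices) lie strictly on the same side of the line through `q` and `vtx i`. -/
def isCritical (q : ℝ × ℝ) (i : ZMod P.n) : Prop :=
  0 < cross2 q (P.vtx i) (P.vtx (i - 1)) * cross2 q (P.vtx i) (P.vtx (i + 1))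

/-- A start critical vertex: both incident edges to the left of ray `qv`. -/
def isStart (q : ℝ × ℝ) (i : ZMod P.n) : Prop :=
  0 < cross2 q (P.vtx i) (P.vtx (i - 1)) ∧ 0 < cross2 q (P.vtx i) (P.vtx (i + 1))

/-- An end critical vertex: both incident edges to the right of ray `qv`. -/
def isEnd (q : ℝ × ℝ) (i : ZMod P.n) : Prop :=
  cross2 q (P.vtx i) (P.vtx (i - 1)) < 0 ∧ cross2 q (P.vtx i) (P.vtx (i + 1)) < 0

/-- The unit vector of direction `θ`. -/
noncomputable def dir (θ : ℝ) : ℝ × ℝ := (Real.cos θ, Real.sin θ)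

/-- The ray `r_θ` from `q` in direction `θ`. -/
def rayFrom (q : ℝ × ℝ) (θ : ℝ) : Set (ℝ × ℝ) :=
  {x | ∃ t : ℝ, 0 ≤ t ∧ x = q + t • dir θ}

/-- The edge list of the ray `r_θ` (as a set of edge indices). -/
def hits (q : ℝ × ℝ) (θ : ℝ) : Set (ZMod P.n) :=
  {i | (rayFrom q θ ∩ P.edge i).Nonempty}

/-- The parameter (distance from `q`) at which the ray `r_θ` first meets edge `i`. -/
noncomputable def hitTime (q : ℝ × ℝ) (θ : ℝ) (i : ZMod P.n) : ℝ :=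
  sInf {t : ℝ | 0 ≤ t ∧ q + t • dir θ ∈ P.edge i}

/-- The position (rank) of edge `i` in the distance-ordered edge list of `r_θ`:
the number of hit edges met strictly earlier. -/
noncomputable def rank (q : ℝ × ℝ) (θ : ℝ) (i : ZMod P.n) : ℕ :=
  {j | j ∈ P.hits q θ ∧ P.hitTime q θ j < P.hitTime q θ i}.ncard

end SimplePolygon

open SimplePolygon

/-!
With no critical vertex, consecutive triangles `q, vtx i, vtx (i + 1)` have the same
orientation, hence all do. Call `x` shadowed if the open segment from `q` to `x` meets `∂P`.
Shadowed points form an open set: an edge hiding a point keeps hiding the nearby points of its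
angular cone. Within `∂P` they also form a closed set, namely the points of `∂P` lying behind
some non-adjacent edge: under a common orientation no two points of one edge, or of adjacent
edges, are aligned with `q`, while behind a disjoint edge a point is always shadowed. A point
of `∂P` nearest to `q` is not shadowed, so by connectedness of `∂P` none is: `P` is star-shaped
from `q`. Hence the ray beyond a point hidden behind `∂P` never meets `∂P`, so that point lies
in an unbounded component of the complement, outside `P`. So no segment from `q` to a point of
`P` crosses `∂P`, and every point of `∂P` is a limit of points outside `P`.
-/

open Filter Topology Bornology

theorem isOpen_setOf_mem_and_connectedComponentIn {X : Type*} [TopologicalSpace X]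
    [LocallyConnectedSpace X] {U : Set X} (hU : IsOpen U) (p : Set X → Prop) :
    IsOpen {x | x ∈ U ∧ p (connectedComponentIn U x)} := by
  refine isOpen_iff_mem_nhds.mpr fun x ⟨hx, hpx⟩ => ?_
  filter_upwards [hU.connectedComponentIn.mem_nhds (mem_connectedComponentIn hx)] with y hy
  exact ⟨connectedComponentIn_subset U x hy, connectedComponentIn_eq hy ▸ hpx⟩

theorem not_isBounded_image_Ici {E : Type*} [NormedAddCommGroup E] [NormedSpace ℝ E] {u : E}
    (hu : u ≠ 0) (p : E) (a : ℝ) : ¬ IsBounded ((fun s : ℝ => p + s • u) '' Ici a) := by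
  intro h
  obtain ⟨C, hC⟩ := isBounded_iff_forall_norm_le.mp h
  have hu' : 0 < ‖u‖ := norm_pos_iff.mpr hu
  set s := max a ((C + ‖p‖ + 1) / ‖u‖)
  have h₁ := hC _ ⟨s, mem_Ici.mpr (le_max_left _ _), rfl⟩
  have h₂ : (C + ‖p‖ + 1) / ‖u‖ ≤ s := le_max_right _ _
  have h₃ : ‖s • u‖ ≤ ‖p + s • u‖ + ‖p‖ := by
    simpa using norm_sub_le (p + s • u) p
  rw [norm_smul, Real.norm_eq_abs] at h₃
  rw [div_le_iff₀ hu'] at h₂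
  nlinarith [le_abs_self s]

theorem add_smul_sub_mem_openSegment {E : Type*} [AddCommGroup E] [Module ℝ E] (q p : E)
    {t s : ℝ} (ht : 0 < t) (hts : t < s) :
    q + t • (p - q) ∈ openSegment ℝ q (q + s • (p - q)) := by
  have hs : 0 < s := ht.trans hts
  rw [openSegment_eq_image']
  refine ⟨t / s, ⟨div_pos ht hs, (div_lt_one hs).mpr hts⟩, ?_⟩
  simp only [add_sub_cancel_left, smul_smul, div_mul_cancel₀ _ hs.ne']

namespace SimplePolygon

instance (P : SimplePolygon) : NeZero P.n := ⟨by have := P.three_le; omega⟩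

theorem cross2_self (q a : ℝ × ℝ) : cross2 q a a = 0 := by
  unfold cross2; ring

theorem cross2_swap (q a b : ℝ × ℝ) : cross2 q b a = -cross2 q a b := by
  unfold cross2; ring

theorem cross2_add_smul_sub (q z w : ℝ × ℝ) (t : ℝ) :
    cross2 q (q + t • (z - q)) w = t * cross2 q z w := by
  simp only [cross2, Prod.fst_add, Prod.snd_add, Prod.smul_fst, Prod.smul_snd, Prod.fst_sub,
    Prod.snd_sub, smul_eq_mul]
  ring

theorem cross2_add_smul_sub_left (q a b w : ℝ × ℝ) (s : ℝ) :
    cross2 q (a + s • (b - a)) w = (1 - s) * cross2 q a w + s * cross2 q b w := by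
  simp only [cross2, Prod.fst_add, Prod.snd_add, Prod.smul_fst, Prod.smul_snd, Prod.fst_sub,
    Prod.snd_sub, smul_eq_mul]
  ring

/-- Cramer's rule in the basis `a - q`, `b - q`. -/
theorem cross2_smul_sub (q a b z : ℝ × ℝ) :
    cross2 q a b • (z - q) = cross2 q z b • (a - q) - cross2 q z a • (b - q) := by
  ext <;> simp only [cross2, Prod.smul_fst, Prod.smul_snd, Prod.fst_sub, Prod.snd_sub,
    smul_eq_mul] <;> ring

theorem continuous_cross2 (q w : ℝ × ℝ) : Continuous fun z => cross2 q z w := by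
  unfold cross2; fun_prop

theorem collinear_of_cross2_eq_zero {q a b : ℝ × ℝ} (h : cross2 q a b = 0) :
    Collinear ℝ ({q, a, b} : Set (ℝ × ℝ)) := by
  by_cases haq : a = q
  · subst haq
    simpa using collinear_pair ℝ a b
  have hden : (a.1 - q.1) ^ 2 + (a.2 - q.2) ^ 2 ≠ 0 := by
    intro h0
    exact haq (Prod.ext (by nlinarith [sq_nonneg (a.1 - q.1), sq_nonneg (a.2 - q.2)])
      (by nlinarith [sq_nonneg (a.1 - q.1), sq_nonneg (a.2 - q.2)]))
  have hb : b = AffineMap.lineMap q a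
      (((a.1 - q.1) * (b.1 - q.1) + (a.2 - q.2) * (b.2 - q.2)) /
        ((a.1 - q.1) ^ 2 + (a.2 - q.2) ^ 2)) := by
    unfold cross2 at h
    ext <;> simp only [AffineMap.lineMap_apply_module', Prod.fst_add, Prod.snd_add,
      Prod.smul_fst, Prod.smul_snd, Prod.fst_sub, Prod.snd_sub, smul_eq_mul] <;> field_simp
    · linear_combination (-(a.2 - q.2)) * h
    · linear_combination (a.1 - q.1) * h
  rw [hb]
  exact collinear_triple_of_mem_affineSpan_pair (left_mem_affineSpan_pair ℝ q a)
    (right_mem_affineSpan_pair ℝ q a) (AffineMap.lineMap_mem_affineSpan_pair _ q a)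

theorem exists_pos_cross2_eq_mul {q y z : ℝ × ℝ} (h : y ∈ openSegment ℝ q z) :
    ∃ t : ℝ, 0 < t ∧ ∀ w, cross2 q y w = t * cross2 q z w := by
  rw [openSegment_eq_image'] at h
  obtain ⟨t, ⟨ht, -⟩, rfl⟩ := h
  exact ⟨t, ht, fun w => cross2_add_smul_sub q z w t⟩

theorem mul_cross2_neg_of_mem_openSegment {q y z w : ℝ × ℝ} {ε : ℝ}
    (h : y ∈ openSegment ℝ q z) (hy : ε * cross2 q y w < 0) : ε * cross2 q z w < 0 := by
  obtain ⟨t, ht, hc⟩ := exists_pos_cross2_eq_mul h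
  exact neg_of_mul_neg_right (a := t) (by linear_combination hy - ε * hc w) ht.le

theorem mul_cross2_pos_of_mem_openSegment {q y z w : ℝ × ℝ} {ε : ℝ}
    (h : y ∈ openSegment ℝ q z) (hy : 0 < ε * cross2 q y w) : 0 < ε * cross2 q z w := by
  obtain ⟨t, ht, hc⟩ := exists_pos_cross2_eq_mul h
  exact pos_of_mul_pos_right (a := t) (by linear_combination hy + ε * hc w) ht.le

variable {P : SimplePolygon} {q : ℝ × ℝ} {ε : ℝ}

noncomputable def edgeArea (P : SimplePolygon) (q : ℝ × ℝ) (i : ZMod P.n) : ℝ :=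
  cross2 q (P.vtx i) (P.vtx (i + 1))

theorem edgeArea_ne_zero (hw : P.wgp q) (i : ZMod P.n) : P.edgeArea q i ≠ 0 := by
  refine fun h => hw i (i + 1) ?_ (collinear_of_cross2_eq_zero h)
  have : Fact (1 < P.n) := ⟨by have := P.three_le; omega⟩
  simp

theorem edgeArea_mul_edgeArea_add_one_pos {i : ZMod P.n} (hw : P.wgp q)
    (hnc : ¬ P.isCritical q (i + 1)) :
    0 < P.edgeArea q i * P.edgeArea q (i + 1) := by
  have h : cross2 q (P.vtx (i + 1)) (P.vtx i) * P.edgeArea q (i + 1) ≤ 0 := by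
    simpa [isCritical, edgeArea] using hnc
  rw [cross2_swap, ← edgeArea, neg_mul, neg_nonpos] at h
  exact h.lt_of_ne (mul_ne_zero (edgeArea_ne_zero hw i) (edgeArea_ne_zero hw (i + 1))).symm

theorem exists_forall_mul_edgeArea_pos (hw : P.wgp q) (hnc : ∀ i, ¬ P.isCritical q i) :
    ∃ ε : ℝ, ∀ i, 0 < ε * P.edgeArea q i := by
  refine ⟨P.edgeArea q 0, fun i => ?_⟩
  rw [← ZMod.natCast_zmod_val i]
  induction i.val with
  | zero => simpa using mul_self_pos.mpr (edgeArea_ne_zero hw 0)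
  | succ m ih =>
    have hstep := edgeArea_mul_edgeArea_add_one_pos hw (hnc ((m : ZMod P.n) + 1))
    push_cast
    nlinarith [mul_self_pos.mpr (edgeArea_ne_zero hw (m : ZMod P.n))]

theorem edge_subset_boundary (i : ZMod P.n) : P.edge i ⊆ P.boundary :=
  subset_iUnion P.edge i

theorem vtx_mem_edge (i : ZMod P.n) : P.vtx i ∈ P.edge i := left_mem_segment ℝ _ _

theorem vtx_add_one_mem_edge (i : ZMod P.n) : P.vtx (i + 1) ∈ P.edge i :=
  right_mem_segment ℝ _ _

theorem exists_cross2_of_mem_edge {i : ZMod P.n} {y : ℝ × ℝ} (hy : y ∈ P.edge i) :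
    ∃ s ∈ Icc (0 : ℝ) 1, y = P.vtx i + s • (P.vtx (i + 1) - P.vtx i) ∧
      cross2 q y (P.vtx i) = -(s * P.edgeArea q i) ∧
      cross2 q y (P.vtx (i + 1)) = (1 - s) * P.edgeArea q i := by
  rw [edge, segment_eq_image'] at hy
  obtain ⟨s, hs, rfl⟩ := hy
  refine ⟨s, hs, rfl, ?_, ?_⟩ <;>
    simp only [cross2_add_smul_sub_left, cross2_self, cross2_swap q (P.vtx i) (P.vtx (i + 1)),
      edgeArea] <;> ring

/-- Consequently the ray from `q` through `z` can meet edge `i` only at the parameter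
`edgeArea q i / (cross2 q z (vtx (i + 1)) - cross2 q z (vtx i))`. -/
theorem cross2_sub_cross2_of_mem_edge {i : ZMod P.n} {y : ℝ × ℝ} (hy : y ∈ P.edge i) :
    cross2 q y (P.vtx (i + 1)) - cross2 q y (P.vtx i) = P.edgeArea q i := by
  obtain ⟨s, -, -, h₀, h₁⟩ := exists_cross2_of_mem_edge (q := q) hy
  rw [h₀, h₁]; ring

/-- The directions from `q` swept out by edge `i`, for edges turning in the sense of `ε`. -/
def cone (P : SimplePolygon) (q : ℝ × ℝ) (ε : ℝ) (i : ZMod P.n) : Set (ℝ × ℝ) :=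
  {z | ε * cross2 q z (P.vtx i) ≤ 0 ∧ 0 ≤ ε * cross2 q z (P.vtx (i + 1))}

theorem mul_cross2_vtx_neg_of_mem_edge {i : ZMod P.n} {y : ℝ × ℝ}
    (hK : 0 < ε * P.edgeArea q i) (hy : y ∈ P.edge i) (hne : y ≠ P.vtx i) :
    ε * cross2 q y (P.vtx i) < 0 := by
  obtain ⟨s, ⟨hs₀, -⟩, rfl, h₀, -⟩ := exists_cross2_of_mem_edge (q := q) hy
  have hs : 0 < s := hs₀.lt_of_ne' (by rintro rfl; simp at hne)
  rw [h₀]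
  nlinarith

theorem mul_cross2_vtx_add_one_pos_of_mem_edge {i : ZMod P.n} {y : ℝ × ℝ}
    (hK : 0 < ε * P.edgeArea q i) (hy : y ∈ P.edge i) (hne : y ≠ P.vtx (i + 1)) :
    0 < ε * cross2 q y (P.vtx (i + 1)) := by
  obtain ⟨s, ⟨-, hs₁⟩, rfl, -, h₁⟩ := exists_cross2_of_mem_edge (q := q) hy
  have hs : s < 1 := hs₁.lt_of_ne (by rintro rfl; simp at hne)
  rw [h₁]
  nlinarith

theorem edge_subset_cone {i : ZMod P.n} (hK : 0 < ε * P.edgeArea q i) :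
    P.edge i ⊆ P.cone q ε i := by
  intro y hy
  obtain ⟨s, ⟨hs₀, hs₁⟩, -, h₀, h₁⟩ := exists_cross2_of_mem_edge (q := q) hy
  rw [cone, mem_ofPred_eq, h₀, h₁]
  constructor <;> nlinarith

theorem add_smul_sub_mem_edge {i : ZMod P.n} {z : ℝ × ℝ} (hK : 0 < ε * P.edgeArea q i)
    (hz : z ∈ P.cone q ε i)
    (hD : 0 < ε * (cross2 q z (P.vtx (i + 1)) - cross2 q z (P.vtx i))) :
    q + (P.edgeArea q i / (cross2 q z (P.vtx (i + 1)) - cross2 q z (P.vtx i))) • (z - q) ∈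
      P.edge i := by
  have hε : ε ≠ 0 := left_ne_zero_of_mul hK.ne'
  set X := cross2 q z (P.vtx i)
  set Y := cross2 q z (P.vtx (i + 1))
  have hD₀ : Y - X ≠ 0 := right_ne_zero_of_mul hD.ne'
  refine ⟨Y / (Y - X), -X / (Y - X), ?_, ?_, by field_simp; ring, ?_⟩
  · rw [← mul_div_mul_left _ _ hε]; exact div_nonneg hz.2 hD.le
  · rw [← mul_div_mul_left _ _ hε, mul_neg]; exact div_nonneg (neg_nonneg.mpr hz.1) hD.le
  · have key : (P.edgeArea q i / (Y - X)) • (z - q) =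
        (Y - X)⁻¹ • (Y • (P.vtx i - q) - X • (P.vtx (i + 1) - q)) := by
      rw [div_eq_inv_mul, ← smul_smul]
      exact congrArg _ (cross2_smul_sub _ _ _ _)
    rw [key]
    match_scalars <;> field_simp
    ring

def Shadowed (P : SimplePolygon) (q x : ℝ × ℝ) : Prop :=
  (P.boundary ∩ openSegment ℝ q x).Nonempty

theorem eventually_shadowed_of_mem_cone {i : ZMod P.n} {y z : ℝ × ℝ}
    (hK : 0 < ε * P.edgeArea q i) (hy : y ∈ P.edge i) (hyz : y ∈ openSegment ℝ q z) :
    ∀ᶠ z' in 𝓝 z, z' ∈ P.cone q ε i → P.Shadowed q z' := by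
  have hε : ε ≠ 0 := left_ne_zero_of_mul hK.ne'
  set D : ℝ × ℝ → ℝ := fun z' => cross2 q z' (P.vtx (i + 1)) - cross2 q z' (P.vtx i)
  have hDc : Continuous D := (continuous_cross2 _ _).sub (continuous_cross2 _ _)
  rw [openSegment_eq_image'] at hyz
  obtain ⟨t, ⟨ht₀, ht₁⟩, rfl⟩ := hyz
  have htD : t * D z = P.edgeArea q i := by
    rw [← cross2_sub_cross2_of_mem_edge hy, cross2_add_smul_sub, cross2_add_smul_sub]; ring
  have hDz : 0 < ε * D z :=
    pos_of_mul_pos_right (a := t) (by rw [mul_left_comm, htD]; exact hK) ht₀.le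
  have hDz₀ : D z ≠ 0 := right_ne_zero_of_mul hDz.ne'
  have hτ : P.edgeArea q i / D z < 1 := by rwa [← htD, mul_div_assoc, div_self hDz₀, mul_one]
  have hD_ev : ∀ᶠ z' in 𝓝 z, 0 < ε * D z' :=
    (continuous_const.mul hDc).continuousAt.eventually (eventually_gt_nhds hDz)
  have hτ_ev : ∀ᶠ z' in 𝓝 z, P.edgeArea q i / D z' < 1 :=
    (continuousAt_const.div hDc.continuousAt hDz₀).eventually (eventually_lt_nhds hτ)
  filter_upwards [hD_ev, hτ_ev] with z' hD' hτ' hz'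
  refine ⟨_, edge_subset_boundary i (add_smul_sub_mem_edge hK hz' hD'), ?_⟩
  rw [openSegment_eq_image']
  refine ⟨_, ⟨?_, hτ'⟩, rfl⟩
  rw [← mul_div_mul_left _ _ hε]
  exact div_pos hK hD'

theorem eventually_shadowed_of_vtx_mem_openSegment (hK : ∀ i, 0 < ε * P.edgeArea q i)
    {i : ZMod P.n} {z : ℝ × ℝ} (h : P.vtx i ∈ openSegment ℝ q z) :
    ∀ᶠ z' in 𝓝 z, P.Shadowed q z' := by
  have hprev : P.vtx i ∈ P.edge (i - 1) := by simpa using vtx_add_one_mem_edge (P := P) (i - 1)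
  have hprev_neg : ε * cross2 q z (P.vtx (i - 1)) < 0 := by
    refine mul_cross2_neg_of_mem_openSegment h ?_
    have := hK (i - 1)
    rw [edgeArea, sub_add_cancel] at this
    rw [cross2_swap]
    linarith
  have hnext_pos : 0 < ε * cross2 q z (P.vtx (i + 1)) :=
    mul_cross2_pos_of_mem_openSegment h (hK i)
  filter_upwards [eventually_shadowed_of_mem_cone (hK (i - 1)) hprev h,
    eventually_shadowed_of_mem_cone (hK i) (vtx_mem_edge i) h,
    (continuous_const.mul (continuous_cross2 q _)).continuousAt.eventually
      (eventually_lt_nhds hprev_neg),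
    (continuous_const.mul (continuous_cross2 q _)).continuousAt.eventually
      (eventually_gt_nhds hnext_pos)] with z' h₁ h₂ hprev' hnext'
  rcases le_total 0 (ε * cross2 q z' (P.vtx i)) with hs | hs
  · exact h₁ ⟨hprev'.le, by rwa [sub_add_cancel]⟩
  · exact h₂ ⟨hs, hnext'.le⟩

theorem isOpen_setOf_shadowed (hK : ∀ i, 0 < ε * P.edgeArea q i) :
    IsOpen {x | P.Shadowed q x} := by
  refine isOpen_iff_mem_nhds.mpr fun z ⟨y, hyb, hyz⟩ => ?_
  obtain ⟨i, hy⟩ := mem_iUnion.mp hyb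
  by_cases h₀ : y = P.vtx i
  · exact eventually_shadowed_of_vtx_mem_openSegment hK (h₀ ▸ hyz)
  by_cases h₁ : y = P.vtx (i + 1)
  · exact eventually_shadowed_of_vtx_mem_openSegment hK (h₁ ▸ hyz)
  filter_upwards [eventually_shadowed_of_mem_cone (hK i) hy hyz,
    (continuous_const.mul (continuous_cross2 q _)).continuousAt.eventually
      (eventually_lt_nhds (mul_cross2_neg_of_mem_openSegment hyz
        (mul_cross2_vtx_neg_of_mem_edge (hK i) hy h₀))),
    (continuous_const.mul (continuous_cross2 q _)).continuousAt.eventually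
      (eventually_gt_nhds (mul_cross2_pos_of_mem_openSegment hyz
        (mul_cross2_vtx_add_one_pos_of_mem_edge (hK i) hy h₁)))] with z' h h₀' h₁'
  exact h ⟨h₀'.le, h₁'.le⟩

theorem isCompact_edge (i : ZMod P.n) : IsCompact (P.edge i) := by
  rw [edge, segment_eq_image']
  exact isCompact_Icc.image (by fun_prop)

theorem isCompact_boundary (P : SimplePolygon) : IsCompact P.boundary :=
  isCompact_iUnion isCompact_edge

theorem isPreconnected_boundary (P : SimplePolygon) : IsPreconnected P.boundary := by
  rw [boundary, ← ZMod.natCast_zmod_surjective.iUnion_comp]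
  refine IsPreconnected.iUnion_of_chain (fun n => (convex_segment _ _).isPreconnected)
    fun n => ⟨P.vtx ((n + 1 : ℕ) : ZMod P.n), ?_, vtx_mem_edge _⟩
  rw [Nat.cast_succ]
  exact vtx_add_one_mem_edge _

/-- A point of `∂P` nearest to `q` is not shadowed. -/
theorem exists_mem_boundary_not_shadowed (hqb : q ∉ P.boundary) :
    ∃ x ∈ P.boundary, ¬ P.Shadowed q x := by
  obtain ⟨x, hx, hmin⟩ := P.isCompact_boundary.exists_isMinOn
    ⟨_, edge_subset_boundary 0 (vtx_mem_edge 0)⟩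
    (continuous_id.dist continuous_const : Continuous fun x => dist x q).continuousOn
  refine ⟨x, hx, fun ⟨y, hy, hyx⟩ => ?_⟩
  rw [openSegment_eq_image'] at hyx
  obtain ⟨t, ⟨ht₀, ht₁⟩, rfl⟩ := hyx
  have hxq : 0 < dist x q := dist_pos.mpr (ne_of_mem_of_not_mem hx hqb)
  have h : dist x q ≤ dist (q + t • (x - q)) q := hmin hy
  rw [dist_eq_norm (q + _), add_sub_cancel_left, norm_smul, Real.norm_of_nonneg ht₀.le,
    ← dist_eq_norm] at h
  nlinarith

theorem notMem_openSegment_of_mem_edge {i : ZMod P.n} {y z : ℝ × ℝ}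
    (hK : P.edgeArea q i ≠ 0) (hy : y ∈ P.edge i) (hz : z ∈ P.edge i) :
    y ∉ openSegment ℝ q z := by
  intro hyz
  rw [openSegment_eq_image'] at hyz
  obtain ⟨t, ⟨-, ht⟩, rfl⟩ := hyz
  have h := cross2_sub_cross2_of_mem_edge (q := q) hy
  rw [cross2_add_smul_sub, cross2_add_smul_sub, ← mul_sub, cross2_sub_cross2_of_mem_edge hz]
    at h
  exact ht.ne (mul_eq_right₀ hK |>.mp h)

theorem eq_of_mem_edge_of_mem_edge_add_one (hK : ∀ i, 0 < ε * P.edgeArea q i) {i : ZMod P.n}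
    {y z : ℝ × ℝ} (hy : y ∈ P.edge i) (hz : z ∈ P.edge (i + 1)) {t : ℝ} (ht : 0 < t)
    (h : ∀ w, cross2 q y w = t * cross2 q z w) : y = z := by
  have hz_le := (edge_subset_cone (hK (i + 1)) hz).1
  have hy_eq : y = P.vtx (i + 1) := by
    by_contra hne
    have := mul_cross2_vtx_add_one_pos_of_mem_edge (hK i) hy hne
    rw [h] at this
    nlinarith
  have hz_eq : z = P.vtx (i + 1) := by
    by_contra hne
    have := mul_cross2_vtx_neg_of_mem_edge (hK (i + 1)) hz hne
    have h₀ := h (P.vtx (i + 1))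
    rw [hy_eq, cross2_self, zero_eq_mul] at h₀
    rw [h₀.resolve_left ht.ne', mul_zero] at this
    exact this.false
  rw [hy_eq, hz_eq]

theorem notMem_openSegment_of_mem_edge_of_mem_edge_add_one (hK : ∀ i, 0 < ε * P.edgeArea q i)
    (hqb : q ∉ P.boundary) {i : ZMod P.n} {y z : ℝ × ℝ} (hy : y ∈ P.edge i)
    (hz : z ∈ P.edge (i + 1)) : y ∉ openSegment ℝ q z ∧ z ∉ openSegment ℝ q y := by
  have hq : ∀ x ∈ P.edge i, x ∉ openSegment ℝ q x := fun x hx hxx =>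
    hqb (right_mem_openSegment_iff.mp hxx ▸ edge_subset_boundary i hx)
  constructor
  · intro hyz
    obtain ⟨t, ht, h⟩ := exists_pos_cross2_eq_mul hyz
    exact hq y hy (by rwa [← eq_of_mem_edge_of_mem_edge_add_one hK hy hz ht h] at hyz)
  · intro hzy
    obtain ⟨t, ht, h⟩ := exists_pos_cross2_eq_mul hzy
    have h' : ∀ w, cross2 q y w = t⁻¹ * cross2 q z w := fun w => by
      rw [h, inv_mul_cancel_left₀ ht.ne']
    rw [← eq_of_mem_edge_of_mem_edge_add_one hK hy hz (inv_pos.mpr ht) h'] at hzy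
    exact hq y hy hzy

def behind (P : SimplePolygon) (q : ℝ × ℝ) (j m : ZMod P.n) : Set (ℝ × ℝ) :=
  {z ∈ P.edge m | ∃ y ∈ P.edge j, y ∈ segment ℝ q z}

theorem isCompact_behind (j m : ZMod P.n) : IsCompact (P.behind q j m) := by
  have : P.behind q j m = Prod.snd '' ((Icc 0 1 ×ˢ P.edge m) ∩
      (fun p : ℝ × (ℝ × ℝ) => q + p.1 • (p.2 - q)) ⁻¹' P.edge j) := by
    ext z
    constructor
    · rintro ⟨hz, y, hy, hyz⟩
      rw [segment_eq_image'] at hyz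
      obtain ⟨t, ht, rfl⟩ := hyz
      exact ⟨(t, z), ⟨⟨ht, hz⟩, hy⟩, rfl⟩
    · rintro ⟨⟨t, z⟩, ⟨⟨ht, hz⟩, hy⟩, rfl⟩
      exact ⟨hz, _, hy, by rw [segment_eq_image']; exact ⟨t, ht, rfl⟩⟩
  rw [this]
  exact ((isCompact_Icc.prod (isCompact_edge m)).inter_right
    ((isCompact_edge j).isClosed.preimage (by fun_prop))).image continuous_snd

theorem exists_mem_behind_of_shadowed (hK : ∀ i, 0 < ε * P.edgeArea q i)
    (hqb : q ∉ P.boundary) {z : ℝ × ℝ} (hz : z ∈ P.boundary) (hs : P.Shadowed q z) :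
    ∃ j m, (j ≠ m ∧ j + 1 ≠ m ∧ m + 1 ≠ j) ∧ z ∈ P.behind q j m := by
  obtain ⟨y, hyb, hyz⟩ := hs
  obtain ⟨j, hy⟩ := mem_iUnion.mp hyb
  obtain ⟨m, hzm⟩ := mem_iUnion.mp hz
  refine ⟨j, m, ⟨?_, ?_, ?_⟩, hzm, y, hy, openSegment_subset_segment _ _ _ hyz⟩
  · rintro rfl
    exact notMem_openSegment_of_mem_edge (right_ne_zero_of_mul (hK j).ne') hy hzm hyz
  · rintro rfl
    exact (notMem_openSegment_of_mem_edge_of_mem_edge_add_one hK hqb hy hzm).1 hyz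
  · rintro rfl
    exact (notMem_openSegment_of_mem_edge_of_mem_edge_add_one hK hqb hzm hy).2 hyz

theorem shadowed_of_mem_behind (hqb : q ∉ P.boundary) {j m : ZMod P.n} (hjm : j ≠ m)
    (hjm' : j + 1 ≠ m) (hmj : m + 1 ≠ j) {z : ℝ × ℝ} (hz : z ∈ P.behind q j m) :
    P.Shadowed q z := by
  obtain ⟨hzm, y, hy, hyz⟩ := hz
  rw [← insert_endpoints_openSegment] at hyz
  rcases hyz with rfl | rfl | hyz
  · exact (hqb (edge_subset_boundary j hy)).elim
  · exact ((P.nondegenerate j m hjm hjm' hmj).subset ⟨hy, hzm⟩).elim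
  · exact ⟨y, edge_subset_boundary j hy, hyz⟩

theorem not_shadowed_of_mem_boundary (hK : ∀ i, 0 < ε * P.edgeArea q i) (hqb : q ∉ P.boundary)
    {x : ℝ × ℝ} (hx : x ∈ P.boundary) : ¬ P.Shadowed q x := by
  set N := ⋃ j, ⋃ m, ⋃ (_ : j ≠ m ∧ j + 1 ≠ m ∧ m + 1 ≠ j), P.behind q j m
  have hN : IsClosed N := isClosed_iUnion_of_finite fun j => isClosed_iUnion_of_finite
    fun m => isClosed_iUnion_of_finite fun _ => (isCompact_behind j m).isClosed
  have shadowed_of_mem_N : ∀ z ∈ N, P.Shadowed q z := fun z hz => by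
    simp only [N, mem_iUnion] at hz
    obtain ⟨j, m, ⟨hjm, hjm', hmj⟩, hz⟩ := hz
    exact shadowed_of_mem_behind hqb hjm hjm' hmj hz
  obtain ⟨x₀, hx₀, hx₀ns⟩ := exists_mem_boundary_not_shadowed hqb
  intro hxs
  obtain ⟨w, hwb, hws, hwN⟩ := P.isPreconnected_boundary _ _ (isOpen_setOf_shadowed hK)
    hN.isOpen_compl (fun z _ => (em (P.Shadowed q z)).imp_right (mt (shadowed_of_mem_N z)))
    ⟨x, hx, hxs⟩ ⟨x₀, hx₀, mt (shadowed_of_mem_N x₀) hx₀ns⟩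
  obtain ⟨j, m, hjm, hw⟩ := exists_mem_behind_of_shadowed hK hqb hwb hws
  exact hwN (mem_iUnion₂.mpr ⟨j, m, mem_iUnion.mpr ⟨hjm, hw⟩⟩)

theorem isOpen_inside (P : SimplePolygon) : IsOpen P.inside :=
  isOpen_setOf_mem_and_connectedComponentIn P.isCompact_boundary.isClosed.isOpen_compl _

theorem isClosed_region (P : SimplePolygon) : IsClosed P.region := by
  rw [← isOpen_compl_iff]
  convert isOpen_setOf_mem_and_connectedComponentIn P.isCompact_boundary.isClosed.isOpen_compl
    (fun C => ¬ IsBounded C) using 1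
  ext x
  simp only [region, inside, mem_compl_iff, mem_union, mem_ofPred_eq, not_or]
  tauto

theorem notMem_region_of_mem_openSegment (hK : ∀ i, 0 < ε * P.edgeArea q i)
    (hqb : q ∉ P.boundary) {z p : ℝ × ℝ} (hz : z ∈ P.boundary)
    (hzp : z ∈ openSegment ℝ q p) :
    p ∉ P.region := by
  have hp : p - q ≠ 0 := by
    rintro h
    rw [sub_eq_zero.mp h, openSegment_same, mem_singleton_iff] at hzp
    exact hqb (hzp ▸ hz)
  set ray := (fun s : ℝ => q + s • (p - q)) '' Ici 1
  have hray : ray ⊆ P.boundaryᶜ := by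
    rintro _ ⟨s, hs, rfl⟩ hb
    rw [openSegment_eq_image'] at hzp
    obtain ⟨t, ⟨ht₀, ht₁⟩, rfl⟩ := hzp
    exact not_shadowed_of_mem_boundary hK hqb hb
      ⟨_, hz, add_smul_sub_mem_openSegment q p ht₀ (ht₁.trans_le hs)⟩
  have hpray : p ∈ ray := ⟨1, self_mem_Ici, by simp⟩
  rintro (⟨-, hbdd⟩ | hpb)
  · exact not_isBounded_image_Ici hp q 1 (hbdd.subset
      ((isPreconnected_Ici.image _ (by fun_prop)).subset_connectedComponentIn hpray hray))
  · exact hray hpray hpb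

theorem frontier_region (hK : ∀ i, 0 < ε * P.edgeArea q i) (hqb : q ∉ P.boundary) :
    frontier P.region = P.boundary := by
  refine Subset.antisymm ?_ fun x hx => ?_
  · rw [P.isClosed_region.frontier_eq]
    rintro x ⟨hin | hb, hint⟩
    · exact absurd (interior_maximal subset_union_left P.isOpen_inside hin) hint
    · exact hb
  have hlim : Tendsto (fun s : ℝ => q + s • (x - q)) (𝓝[>] 1) (𝓝 x) := by
    have := ((by fun_prop : Continuous fun s : ℝ => q + s • (x - q)).tendsto 1)
    rw [one_smul, add_sub_cancel] at this
    exact this.mono_left nhdsWithin_le_nhds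
  rw [frontier_eq_closure_inter_closure]
  refine ⟨subset_closure (Or.inr hx), mem_closure_of_tendsto hlim
    (eventually_nhdsWithin_of_forall fun s hs => notMem_region_of_mem_openSegment hK hqb hx ?_)⟩
  simpa using add_smul_sub_mem_openSegment q x one_pos hs

end SimplePolygon

/-- If `P` has no critical vertices with respect to `q`, then `V_k(P,q) = P`
for every `k`, and in particular `∂V_k(P,q) = ∂P`. -/
theorem vis_eq_region_of_no_critical (P : SimplePolygon) (q : ℝ × ℝ)
    (hq : q ∈ P.inside) (hw : P.wgp q)
    (hnc : ∀ i : ZMod P.n, ¬ P.isCritical q i) (k : ℕ) :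
    P.vis q k = P.region ∧ frontier (P.vis q k) = P.boundary := by
  obtain ⟨ε, hK⟩ := exists_forall_mul_edgeArea_pos hw hnc
  have hvis : P.vis q k = P.region := by
    refine Subset.antisymm (fun p hp => hp.1) fun p hp => ⟨hp, ?_⟩
    have : P.crossSet q p = ∅ := eq_empty_of_forall_notMem fun i ⟨z, hzp, hzi⟩ =>
      notMem_region_of_mem_openSegment hK hq.1 (edge_subset_boundary i hzi) hzp hp
    simp [crossCount, this]
  exact ⟨hvis, hvis ▸ frontier_region hK hq.1⟩
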